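/- arXiv:2212.00224 — 2 statements merged into one kernel-verified Lean document; each statement's English description precedes it below -/
import Mathlib

section
/- Fix η₀ > 0, reals θ and φ, and an admissible quadruple (n,m,ν,μ). Then the function g(η) = √(cosh η − cos θ) · (Q_{n−1/2}^m(cosh η)/q_{n,m}) · Φ_n^ν(θ) Φ_m^μ(φ) is differentiable at η = η₀ and its normal derivative, namely (cosh η₀ − cos θ) · g′(η₀), equals N_{n,m}^{ν,μ}(θ,φ). -/
open Real MeasureTheory intervalIntegral Filter Topology

/-- Associated Legendre function of the second kind of half-integer degree,
`Q_{n-1/2}^m(t)`, defined via its real integral representation (valid for `t > 1`). -/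
noncomputable def Qh (n m : ℕ) (t : ℝ) : ℝ :=
  ((-1 : ℝ) ^ m / (2 : ℝ) ^ ((n : ℝ) + 1 / 2)) *
    (Real.Gamma ((n : ℝ) + (m : ℝ) + 1 / 2) / Real.Gamma ((n : ℝ) + 1 / 2)) *
    (t ^ 2 - 1) ^ ((m : ℝ) / 2) *
    ∫ s in (-1 : ℝ)..1, (1 - s ^ 2) ^ ((n : ℝ) - 1 / 2) * (t - s) ^ (-((n : ℝ) + (m : ℝ) + 1 / 2))

/-- `q_{n,m} = Q_{n-1/2}^m(cosh η₀)`. -/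
noncomputable def qh (η₀ : ℝ) (n m : ℕ) : ℝ := Qh n m (Real.cosh η₀)

/-- `Φ_n^{+1}(θ) = cos (n θ)`, `Φ_n^{-1}(θ) = sin (n θ)`. -/
noncomputable def Phi (ν : ℤ) (n : ℤ) (θ : ℝ) : ℝ :=
  if ν = 1 then Real.cos ((n : ℝ) * θ) else Real.sin ((n : ℝ) * θ)

/-- A quadruple `(n, m, ν, μ)` is admissible. -/
def Admissible (n m : ℕ) (ν μ : ℤ) : Prop :=
  (ν = 1 ∨ ν = -1) ∧ (μ = 1 ∨ μ = -1) ∧ ¬(n = 0 ∧ ν = -1) ∧ ¬(m = 0 ∧ μ = -1)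

/-- Toroidal Neumann constant `ρ_{n,m}(η₀)` (`n ≥ 1`). -/
noncomputable def rhoT (η₀ : ℝ) (n m : ℕ) : ℝ :=
  if n = 1 then
    (1 / (2 * Real.sinh η₀)) *
      (Real.cosh η₀ + (2 * (m : ℝ) - 1) * qh η₀ 1 m / qh η₀ 0 m)
  else
    (1 / (4 * Real.sinh η₀)) *
      ((2 * (n : ℝ) - 1) * Real.cosh η₀ +
        (2 * ((m : ℝ) - (n : ℝ)) + 1) * qh η₀ n m / qh η₀ (n - 1) m)

/-- Toroidal Neumann constant `σ_{n,m}(η₀)`. -/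
noncomputable def sigmaT (η₀ : ℝ) (n m : ℕ) : ℝ :=
  (-1 / (2 * Real.sinh η₀)) *
    ((2 * (n : ℝ) * Real.cosh η₀ ^ 2 + 1) +
      (2 * ((m : ℝ) - (n : ℝ)) - 1) * Real.cosh η₀ * qh η₀ (n + 1) m / qh η₀ n m)

/-- Toroidal Neumann constant `τ_{n,m}(η₀)`. -/
noncomputable def tauT (η₀ : ℝ) (n m : ℕ) : ℝ :=
  (1 / (4 * Real.sinh η₀)) *
    ((2 * (n : ℝ) + 3) * Real.cosh η₀ +
      (2 * ((m : ℝ) - (n : ℝ)) - 3) * qh η₀ (n + 2) m / qh η₀ (n + 1) m)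

/-- The normal derivative `N_{n,m}^{ν,μ}(θ,φ)` of the interior toroidal harmonic
`I_{n,m}^{ν,μ}` on the torus `η = η₀`. -/
noncomputable def NDer (η₀ : ℝ) (n m : ℕ) (ν μ : ℤ) (θ φ : ℝ) : ℝ :=
  (Real.sqrt (Real.cosh η₀ - Real.cos θ) / (4 * Real.sinh η₀)) * Phi μ (m : ℤ) φ *
    (Phi ν ((n : ℤ) - 1) θ *
        ((1 + 2 * (n : ℝ)) * Real.cosh η₀ -
          (2 * ((n : ℝ) - (m : ℝ)) + 1) * qh η₀ (n + 1) m / qh η₀ n m) -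
      2 * Phi ν (n : ℤ) θ *
        ((2 * (n : ℝ) * Real.cosh η₀ ^ 2 + 1) -
          (2 * ((n : ℝ) - (m : ℝ)) + 1) * Real.cosh η₀ * qh η₀ (n + 1) m / qh η₀ n m) +
      Phi ν ((n : ℤ) + 1) θ *
        ((1 + 2 * (n : ℝ)) * Real.cosh η₀ -
          (2 * ((n : ℝ) - (m : ℝ)) + 1) * qh η₀ (n + 1) m / qh η₀ n m))

/-- Interior toroidal harmonic `I_{n,m}^{ν,μ}[η₀]` in toroidal coordinates. -/
noncomputable def Ih (η₀ : ℝ) (n m : ℕ) (ν μ : ℤ) (η θ φ : ℝ) : ℝ :=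
  Real.sqrt (Real.cosh η - Real.cos θ) *
    (Qh n m (Real.cosh η) / Qh n m (Real.cosh η₀)) * Phi ν (n : ℤ) θ * Phi μ (m : ℤ) φ

/-!
Write `Q_{n-1/2}^m(t) = c_{n,m} (t² - 1)^{m/2} K(n - 1/2, n + m + 1/2, t)` with
`K(p, b, t) = ∫_{-1}^{1} (1 - s²)^p (t - s)^{-b} ds`. Differentiating under the integral sign gives
`∂ₜ K(p, b) = -b K(p, b + 1)`; integrating by parts gives
`b K(p + 1, b + 1) = 2 (p + 1) (t K(p, b) - K(p, b - 1))`; and the identity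
`1 - s² = (1 - t²) + 2t (t - s) - (t - s)²` expresses `K(p + 1, b + 1)` through `K(p, ·)`.
Together these give `(t² - 1) ∂ₜ Q_n = (n + 1/2 - m) Q_{n+1} - (n + 1/2) t Q_n`, and the chain
rule in `η` with `Φ_{n-1} + Φ_{n+1} = 2 cos θ Φ_n` turns `(cosh η₀ - cos θ) g'(η₀)` into `N`.
-/

section LegendreKernel

variable {p b t : ℝ}

noncomputable def legendreKernel (p b t : ℝ) : ℝ :=
  ∫ s in (-1 : ℝ)..1, (1 - s ^ 2) ^ p * (t - s) ^ (-b)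

lemma rpow_le_max_rpow {a c x : ℝ} (ha : 0 < a) (hax : a ≤ x) (hxc : x ≤ c) (r : ℝ) :
    x ^ r ≤ max (a ^ r) (c ^ r) := by
  rcases le_or_gt 0 r with hr | hr
  · exact (rpow_le_rpow (ha.trans_le hax).le hxc hr).trans (le_max_right _ _)
  · exact (rpow_le_rpow_of_nonpos ha hax hr.le).trans (le_max_left _ _)

lemma intervalIntegrable_one_sub_sq_rpow (hp : -1 < p) :
    IntervalIntegrable (fun s : ℝ => (1 - s ^ 2) ^ p) volume (-1) 1 := by
  have hleft : IntervalIntegrable (fun s : ℝ => (1 - s ^ 2) ^ p) volume (-1) 0 := by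
    have hsing : IntervalIntegrable (fun s : ℝ => (1 + s) ^ p) volume (-1) 0 := by
      simpa using (intervalIntegral.intervalIntegrable_rpow' hp (a := 0) (b := 1)).comp_add_left 1
    have hreg : ContinuousOn (fun s : ℝ => (1 - s) ^ p) (Set.uIcc (-1) 0) := by
      refine ContinuousOn.rpow_const (by fun_prop) fun s hs => Or.inl ?_
      rw [Set.uIcc_of_le (by norm_num)] at hs
      linarith [hs.2]
    refine (hsing.mul_continuousOn hreg).congr fun s hs => ?_
    rw [Set.uIoc_of_le (by norm_num)] at hs
    simp only [← mul_rpow (by linarith [hs.1] : (0 : ℝ) ≤ 1 + s)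
      (by linarith [hs.2] : (0 : ℝ) ≤ 1 - s)]
    ring_nf
  have hright : IntervalIntegrable (fun s : ℝ => (1 - s ^ 2) ^ p) volume 0 1 := by
    simpa using ((IntervalIntegrable.iff_comp_neg (by simp)).mp hleft).symm
  exact hleft.trans hright

lemma continuousOn_sub_rpow (ht : 1 < t) (r : ℝ) :
    ContinuousOn (fun s : ℝ => (t - s) ^ r) (Set.uIcc (-1) 1) := by
  refine ContinuousOn.rpow_const (by fun_prop) fun s hs => Or.inl ?_
  rw [Set.uIcc_of_le (by norm_num)] at hs
  linarith [hs.2]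

lemma intervalIntegrable_legendreKernel (hp : -1 < p) (ht : 1 < t) (b : ℝ) :
    IntervalIntegrable (fun s : ℝ => (1 - s ^ 2) ^ p * (t - s) ^ (-b)) volume (-1) 1 :=
  (intervalIntegrable_one_sub_sq_rpow hp).mul_continuousOn (continuousOn_sub_rpow ht _)

lemma legendreKernel_pos (hp : -1 < p) (ht : 1 < t) (b : ℝ) : 0 < legendreKernel p b t := by
  refine intervalIntegral.intervalIntegral_pos_of_pos_on
    (intervalIntegrable_legendreKernel hp ht b) (fun s hs => ?_) (by norm_num)
  have h1 : 0 < 1 - s ^ 2 := by nlinarith [hs.1, hs.2]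
  have h2 : 0 < t - s := by linarith [hs.2]
  positivity

lemma hasDerivAt_legendreKernel_integrand {s x : ℝ} (hsx : s < x) (p b : ℝ) :
    HasDerivAt (fun y => (1 - s ^ 2) ^ p * (y - s) ^ (-b))
      (-b * ((1 - s ^ 2) ^ p * (x - s) ^ (-(b + 1)))) x := by
  have h := ((hasDerivAt_rpow_const (p := -b) (Or.inl (sub_pos.2 hsx).ne')).comp x
    ((hasDerivAt_id x).sub_const s)).const_mul ((1 - s ^ 2) ^ p)
  refine h.congr_deriv ?_
  rw [show -b - 1 = -(b + 1) by ring]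
  ring

lemma norm_legendreKernel_integrand_deriv_le {s x a c : ℝ} (hs : s ∈ Set.Icc (-1) 1)
    (ha : 0 < a) (hax : a ≤ x - s) (hxc : x - s ≤ c) (p b : ℝ) :
    ‖-b * ((1 - s ^ 2) ^ p * (x - s) ^ (-(b + 1)))‖ ≤
      |b| * max (a ^ (-(b + 1))) (c ^ (-(b + 1))) * (1 - s ^ 2) ^ p := by
  have hw : 0 ≤ (1 - s ^ 2) ^ p := rpow_nonneg (by nlinarith [hs.1, hs.2]) _
  calc _ = |b| * (x - s) ^ (-(b + 1)) * (1 - s ^ 2) ^ p := by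
        rw [norm_mul, norm_mul, norm_eq_abs, norm_of_nonneg hw, abs_neg,
          norm_of_nonneg (rpow_nonneg (ha.trans_le hax).le _)]
        ring
    _ ≤ _ := by
        gcongr
        exact rpow_le_max_rpow ha hax hxc _

lemma hasDerivAt_legendreKernel (hp : -1 < p) (ht : 1 < t) (b : ℝ) :
    HasDerivAt (legendreKernel p b) (-b * legendreKernel p (b + 1) t) t := by
  have hsub : ∀ x ∈ Set.Ioo ((1 + t) / 2) (t + 1), ∀ s ∈ Set.uIoc (-1 : ℝ) 1,
      s ∈ Set.Icc (-1) 1 ∧ (t - 1) / 2 ≤ x - s ∧ x - s ≤ t + 2 := by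
    intro x hx s hs
    rw [Set.uIoc_of_le (by norm_num)] at hs
    refine ⟨Set.Ioc_subset_Icc_self hs, ?_, ?_⟩ <;> linarith [hx.1, hx.2, hs.1, hs.2]
  have key := intervalIntegral.hasDerivAt_integral_of_dominated_loc_of_deriv_le
    (F := fun x s => (1 - s ^ 2) ^ p * (x - s) ^ (-b))
    (F' := fun x s => -b * ((1 - s ^ 2) ^ p * (x - s) ^ (-(b + 1))))
    (bound := fun s => |b| * max (((t - 1) / 2) ^ (-(b + 1))) ((t + 2) ^ (-(b + 1))) *
      (1 - s ^ 2) ^ p)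
    (s := Set.Ioo ((1 + t) / 2) (t + 1)) (Ioo_mem_nhds (by linarith) (by linarith))
    (by
      filter_upwards [eventually_gt_nhds ht] with x hx
      exact (intervalIntegrable_legendreKernel hp hx b).def'.aestronglyMeasurable)
    (intervalIntegrable_legendreKernel hp ht b)
    (((intervalIntegrable_legendreKernel hp ht (b + 1)).const_mul (-b)).def'.aestronglyMeasurable)
    (by
      filter_upwards with s hs x hx
      obtain ⟨hs, hlo, hhi⟩ := hsub x hx s hs
      exact norm_legendreKernel_integrand_deriv_le hs (by linarith) hlo hhi p b)
    ((intervalIntegrable_one_sub_sq_rpow hp).const_mul _)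
    (by
      filter_upwards with s hs x hx
      obtain ⟨-, hlo, -⟩ := hsub x hx s hs
      exact hasDerivAt_legendreKernel_integrand (by linarith) p b)
  rw [legendreKernel, ← intervalIntegral.integral_const_mul]
  exact key.2

lemma legendreKernel_integration_by_parts (hp : -1 < p) (ht : 1 < t) (b : ℝ) :
    b * legendreKernel (p + 1) (b + 1) t =
      2 * (p + 1) * (t * legendreKernel p b t - legendreKernel p (b - 1) t) := by
  set f' : ℝ → ℝ := fun s => 2 * (p + 1) * ((1 - s ^ 2) ^ p * (t - s) ^ (-(b - 1)) -
      t * ((1 - s ^ 2) ^ p * (t - s) ^ (-b))) + b * ((1 - s ^ 2) ^ (p + 1) * (t - s) ^ (-(b + 1)))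
  have hderiv : ∀ s ∈ Set.Ioo (-1 : ℝ) 1,
      HasDerivAt (fun s : ℝ => (1 - s ^ 2) ^ (p + 1) * (t - s) ^ (-b)) (f' s) s := by
    intro s hs
    have h1 : 0 < 1 - s ^ 2 := by nlinarith [hs.1, hs.2]
    have h2 : 0 < t - s := by linarith [hs.2]
    have hA := (hasDerivAt_rpow_const (p := p + 1) (Or.inl h1.ne')).comp s
      ((hasDerivAt_pow 2 s).const_sub 1)
    have hB := (hasDerivAt_rpow_const (p := -b) (Or.inl h2.ne')).comp s
      ((hasDerivAt_id s).const_sub t)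
    refine (hA.mul hB).congr_deriv ?_
    simp only [f', Function.comp]
    rw [show -(b - 1) = 1 + -b by ring, rpow_add h2, rpow_one,
      show -b - 1 = -(b + 1) by ring, show p + 1 - 1 = p by ring, rpow_add h1, rpow_one]
    push_cast
    ring
  have hcont : ContinuousOn (fun s : ℝ => (1 - s ^ 2) ^ (p + 1) * (t - s) ^ (-b))
      (Set.Icc (-1) 1) := by
    refine ContinuousOn.mul ?_ ?_
    · exact ContinuousOn.rpow_const (by fun_prop) fun _ _ => Or.inr (by linarith)
    · simpa [Set.uIcc_of_le] using continuousOn_sub_rpow ht (-b)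
  have hK := fun c => intervalIntegrable_legendreKernel hp ht c
  have hK1 := intervalIntegrable_legendreKernel (p := p + 1) (by linarith) ht (b + 1)
  have hint : IntervalIntegrable f' volume (-1) 1 :=
    (((hK (b - 1)).sub ((hK b).const_mul t)).const_mul _).add (hK1.const_mul b)
  have hzero := intervalIntegral.integral_eq_sub_of_hasDerivAt_of_le (by norm_num) hcont hderiv hint
  rw [intervalIntegral.integral_add (((hK (b - 1)).sub ((hK b).const_mul t)).const_mul _)
      (hK1.const_mul b), intervalIntegral.integral_const_mul, intervalIntegral.integral_sub
      (hK (b - 1)) ((hK b).const_mul t), intervalIntegral.integral_const_mul,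
    intervalIntegral.integral_const_mul] at hzero
  simp only [one_pow, sub_self, neg_one_sq, zero_rpow (by linarith : p + 1 ≠ 0),
    zero_mul] at hzero
  simp only [legendreKernel]
  linear_combination hzero

lemma legendreKernel_add_one_add_one (hp : -1 < p) (ht : 1 < t) (b : ℝ) :
    legendreKernel (p + 1) (b + 1) t = (1 - t ^ 2) * legendreKernel p (b + 1) t +
      2 * t * legendreKernel p b t - legendreKernel p (b - 1) t := by
  have hK := fun c => intervalIntegrable_legendreKernel hp ht c
  have hpt : ∀ s ∈ Set.uIcc (-1 : ℝ) 1, (1 - s ^ 2) ^ (p + 1) * (t - s) ^ (-(b + 1)) =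
      (1 - t ^ 2) * ((1 - s ^ 2) ^ p * (t - s) ^ (-(b + 1))) +
        2 * t * ((1 - s ^ 2) ^ p * (t - s) ^ (-b)) - (1 - s ^ 2) ^ p * (t - s) ^ (-(b - 1)) := by
    intro s hs
    rw [Set.uIcc_of_le (by norm_num)] at hs
    have h1 : 0 ≤ 1 - s ^ 2 := by nlinarith [hs.1, hs.2]
    have h2 : 0 < t - s := by linarith [hs.2]
    rw [rpow_add' h1 (by linarith), show -b = 1 + -(b + 1) by ring,
      show -(b - 1) = 2 + -(b + 1) by ring, rpow_add h2, rpow_add h2, rpow_one,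
      rpow_two, rpow_one]
    ring
  rw [legendreKernel, intervalIntegral.integral_congr hpt, intervalIntegral.integral_sub
      (((hK (b + 1)).const_mul _).add ((hK b).const_mul _)) (hK (b - 1)),
    intervalIntegral.integral_add ((hK (b + 1)).const_mul _) ((hK b).const_mul _),
    intervalIntegral.integral_const_mul, intervalIntegral.integral_const_mul]
  rfl

lemma legendreKernel_contiguous (hp : -1 < p) (ht : 1 < t) (b : ℝ) :
    b * (t ^ 2 - 1) * legendreKernel p (b + 1) t =
      2 * (b - p - 1) * t * legendreKernel p b t + (2 * (p + 1) - b) * legendreKernel p (b - 1) t := by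
  linear_combination b * legendreKernel_add_one_add_one hp ht b -
    legendreKernel_integration_by_parts hp ht b

end LegendreKernel

lemma neg_one_lt_natCast_sub_half (n : ℕ) : (-1 : ℝ) < n - 1 / 2 := by
  linarith [(n.cast_nonneg : (0 : ℝ) ≤ n)]

noncomputable def qhCoeff (n m : ℕ) : ℝ :=
  (-1 : ℝ) ^ m / (2 : ℝ) ^ ((n : ℝ) + 1 / 2) *
    (Gamma ((n : ℝ) + (m : ℝ) + 1 / 2) / Gamma ((n : ℝ) + 1 / 2))

lemma qhCoeff_ne_zero (n m : ℕ) : qhCoeff n m ≠ 0 := by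
  unfold qhCoeff
  have := Gamma_pos_of_pos (by positivity : (0 : ℝ) < n + m + 1 / 2)
  have := Gamma_pos_of_pos (by positivity : (0 : ℝ) < n + 1 / 2)
  positivity

lemma qhCoeff_succ (n m : ℕ) :
    qhCoeff (n + 1) m = ((n : ℝ) + m + 1 / 2) / (2 * ((n : ℝ) + 1 / 2)) * qhCoeff n m := by
  have hΓ := Gamma_pos_of_pos (by positivity : (0 : ℝ) < n + 1 / 2)
  unfold qhCoeff
  push_cast
  rw [show (n : ℝ) + 1 + m + 1 / 2 = (n + m + 1 / 2) + 1 by ring,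
    show (n : ℝ) + 1 + 1 / 2 = (n + 1 / 2) + 1 by ring,
    Gamma_add_one (by positivity), Gamma_add_one (by positivity),
    rpow_add_one (by norm_num)]
  field_simp

lemma Qh_eq_qhCoeff_mul (n m : ℕ) (t : ℝ) :
    Qh n m t = qhCoeff n m * (t ^ 2 - 1) ^ ((m : ℝ) / 2) *
      legendreKernel ((n : ℝ) - 1 / 2) ((n : ℝ) + m + 1 / 2) t :=
  rfl

lemma Qh_succ {t : ℝ} (ht : 1 < t) (n m : ℕ) :
    Qh (n + 1) m t = qhCoeff n m * (t ^ 2 - 1) ^ ((m : ℝ) / 2) *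
      (t * legendreKernel ((n : ℝ) - 1 / 2) ((n : ℝ) + m + 1 / 2) t -
        legendreKernel ((n : ℝ) - 1 / 2) ((n : ℝ) + m + 1 / 2 - 1) t) := by
  have hp := neg_one_lt_natCast_sub_half n
  have hibp := legendreKernel_integration_by_parts hp ht ((n : ℝ) + m + 1 / 2)
  rw [Qh_eq_qhCoeff_mul, qhCoeff_succ, show ((n + 1 : ℕ) : ℝ) - 1 / 2 = (n - 1 / 2) + 1 by
    push_cast; ring, show ((n + 1 : ℕ) : ℝ) + m + 1 / 2 = (n + m + 1 / 2) + 1 by push_cast; ring]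
  have hn : (n : ℝ) + 1 / 2 ≠ 0 := by positivity
  -- abstract the kernel values so that `field_simp` leaves their arguments alone
  generalize legendreKernel _ (_ + 1) t = Kp at hibp ⊢
  generalize legendreKernel _ (_ - 1) t = Km at hibp ⊢
  generalize legendreKernel _ _ t = K at hibp ⊢
  field_simp
  linear_combination 2 * qhCoeff n m * (t ^ 2 - 1) ^ ((m : ℝ) / 2) * hibp

lemma Qh_ne_zero {t : ℝ} (ht : 1 < t) (n m : ℕ) : Qh n m t ≠ 0 := by
  have hp := neg_one_lt_natCast_sub_half n
  have hW : 0 < (t ^ 2 - 1) ^ ((m : ℝ) / 2) := rpow_pos_of_pos (by nlinarith) _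
  rw [Qh_eq_qhCoeff_mul]
  exact mul_ne_zero (mul_ne_zero (qhCoeff_ne_zero n m) hW.ne')
    (legendreKernel_pos hp ht _).ne'

lemma hasDerivAt_Qh {t : ℝ} (ht : 1 < t) (n m : ℕ) :
    HasDerivAt (Qh n m)
      ((((n : ℝ) + 1 / 2 - m) * Qh (n + 1) m t - ((n : ℝ) + 1 / 2) * t * Qh n m t) / (t ^ 2 - 1))
      t := by
  have hp := neg_one_lt_natCast_sub_half n
  have ht2 : 0 < t ^ 2 - 1 := by nlinarith
  have hW := (hasDerivAt_rpow_const (p := (m : ℝ) / 2) (Or.inl ht2.ne')).comp t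
    ((hasDerivAt_pow 2 t).sub_const 1)
  have hK := hasDerivAt_legendreKernel hp ht ((n : ℝ) + m + 1 / 2)
  have hQ : Qh n m = fun u => qhCoeff n m * ((u ^ 2 - 1) ^ ((m : ℝ) / 2) *
      legendreKernel ((n : ℝ) - 1 / 2) ((n : ℝ) + m + 1 / 2) u) := by
    funext u
    rw [Qh_eq_qhCoeff_mul, mul_assoc]
  rw [hQ]
  refine ((hW.mul hK).const_mul (qhCoeff n m)).congr_deriv ?_
  rw [← hQ, Qh_succ ht, Qh_eq_qhCoeff_mul, rpow_sub_one ht2.ne']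
  have hrel := legendreKernel_contiguous hp ht ((n : ℝ) + m + 1 / 2)
  simp only [Function.comp]
  generalize legendreKernel _ (_ + 1) t = Kp at hrel ⊢
  generalize legendreKernel _ (_ - 1) t = Km at hrel ⊢
  generalize legendreKernel _ _ t = K at hrel ⊢
  field_simp
  push_cast
  linear_combination (-2 * qhCoeff n m) * hrel

lemma Phi_sub_one_add_Phi_add_one (ν k : ℤ) (θ : ℝ) :
    Phi ν (k - 1) θ + Phi ν (k + 1) θ = 2 * cos θ * Phi ν k θ := by
  unfold Phi
  split_ifs <;> push_cast <;>
    simp only [sub_mul, add_mul, one_mul, cos_sub, cos_add, sin_sub, sin_add] <;> ring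

theorem normal_derivative_toroidal_harmonic_general (η₀ : ℝ) (hη₀ : 0 < η₀) (θ φ : ℝ)
    (n m : ℕ) (ν μ : ℤ) :
    DifferentiableAt ℝ (fun η => Ih η₀ n m ν μ η θ φ) η₀ ∧
    (Real.cosh η₀ - Real.cos θ) * deriv (fun η => Ih η₀ n m ν μ η θ φ) η₀ =
      NDer η₀ n m ν μ θ φ := by
  have ht : 1 < cosh η₀ := one_lt_cosh.2 hη₀.ne'
  have hc : 0 < cosh η₀ - cos θ := by linarith [cos_le_one θ]
  have hradial := ((hasDerivAt_sqrt hc.ne').comp η₀ ((hasDerivAt_cosh η₀).sub_const (cos θ))).mul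
    ((hasDerivAt_Qh ht n m).comp η₀ (hasDerivAt_cosh η₀))
  have hI : HasDerivAt (fun η => Ih η₀ n m ν μ η θ φ) _ η₀ :=
    (hradial.mul_const (Phi ν n θ * Phi μ m φ / Qh n m (cosh η₀))).congr_of_eventuallyEq
      (.of_forall fun η => by simp only [Ih, Pi.mul_apply, Function.comp]; ring)
  refine ⟨hI.differentiableAt, ?_⟩
  have hQ := Qh_ne_zero ht n m
  have hS : sinh η₀ ^ 2 = cosh η₀ ^ 2 - 1 := sinh_sq η₀
  have hS0 : sinh η₀ ≠ 0 := (sinh_pos_iff.2 hη₀).ne'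
  have hr : √(cosh η₀ - cos θ) ^ 2 = cosh η₀ - cos θ := sq_sqrt hc.le
  have hr0 : √(cosh η₀ - cos θ) ≠ 0 := (sqrt_pos.2 hc).ne'
  rw [hI.deriv, NDer]
  simp only [qh, Function.comp]
  rw [← hS]
  field_simp
  rw [hr, hS, eq_sub_of_add_eq (Phi_sub_one_add_Phi_add_one ν n θ)]
  ring

/-- the normal derivative of an interior toroidal harmonic equals
`N_{n,m}^{ν,μ}`. -/
theorem normal_derivative_toroidal_harmonic (η₀ : ℝ) (hη₀ : 0 < η₀) (θ φ : ℝ)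
    (n m : ℕ) (ν μ : ℤ) (h : Admissible n m ν μ) :
    DifferentiableAt ℝ (fun η => Ih η₀ n m ν μ η θ φ) η₀ ∧
    (Real.cosh η₀ - Real.cos θ) * deriv (fun η => Ih η₀ n m ν μ η θ φ) η₀ =
      NDer η₀ n m ν μ θ φ :=
  normal_derivative_toroidal_harmonic_general η₀ hη₀ θ φ n m ν μ
end

section
/- Fix η₀ > 0 and let (b_{n,m}^{ν,μ}) be reals indexed by admissible quadruples with Σ |b_{n,m}^{ν,μ}| < ∞. Define h(θ,φ) = √(t₀ − cos θ) · Σ b_{n,m}^{ν,μ} Φ_n^ν(θ) Φ_m^μ(φ). Then the surface integral of h over the torus η = η₀ satisfies ∫_{−π}^{π} ∫_{−π}^{π} h(θ,φ) · ( s₀/(t₀ − cos θ)² ) dθ dφ = −8√2 · π · Σ_{n=0}^∞ b_{n,0}^{+1,+1} · q_{n,1}, the series on the right converging absolutely. In particular, the compatibility condition ∫ h dS = 0 for the Neumann problem is equivalent to Σ_{n=0}^∞ q_{n,1} b_{n,0}^{+1,+1} = 0. -/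
open Real MeasureTheory intervalIntegral Filter Topology

/-!
Integrating the absolutely convergent series term by term, the `φ`-integral kills every mode
except `μ = +1, m = 0`, and `sin (n θ)` integrates to zero against the even weight
`√(t₀ - cos θ) · s₀ / (t₀ - cos θ)² = s₀ (t₀ - cos θ)^{-3/2}`. Each mode `cos (n θ)` contributes
`2π s₀ A_n` with `A_n = ∫_{-π}^{π} cos (n θ) (t₀ - cos θ)^{-3/2} dθ`, so it remains to show
`s₀ A_n = -4√2 q_{n,1}`. The substitution `s = cos θ` turns the integral defining `q_{n,1}` into
`J_n = ∫_0^π sin^{2n} θ (t₀ - cos θ)^{-n-3/2} dθ`. Integrations by parts show that both `A_n` and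
`2^{1-n} (2n+1) J_n` satisfy the three-term recurrence of `Q^1_{n-1/2}(t₀)`, and they agree for
`n = 0, 1`.
-/

section SymmetricIntegral

variable {f : ℝ → ℝ} {a : ℝ}

lemma integral_symmetric_of_even (hf : Continuous f) (heven : ∀ x, f (-x) = f x) :
    ∫ x in -a..a, f x = 2 * ∫ x in 0..a, f x := by
  have hleft : ∫ x in -a..0, f x = ∫ x in 0..a, f x := by
    simpa [heven] using integral_comp_neg (a := -a) (b := 0) f
  rw [← integral_add_adjacent_intervals (hf.intervalIntegrable _ _) (hf.intervalIntegrable _ _),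
    hleft]
  ring

lemma integral_symmetric_of_odd (hf : Continuous f) (hodd : ∀ x, f (-x) = -f x) :
    ∫ x in -a..a, f x = 0 := by
  have hleft : ∫ x in -a..0, f x = -∫ x in 0..a, f x := by
    simpa [hodd, neg_eq_iff_eq_neg] using integral_comp_neg (a := -a) (b := 0) f
  rw [← integral_add_adjacent_intervals (hf.intervalIntegrable _ _) (hf.intervalIntegrable _ _),
    hleft]
  ring

end SymmetricIntegral

section SubCosRpow

variable {t : ℝ}

lemma sub_cos_pos (ht : 1 < t) (θ : ℝ) : 0 < t - cos θ := by
  linarith [cos_le_one θ]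

lemma continuous_sub_cos_rpow (ht : 1 < t) (c : ℝ) : Continuous fun θ => (t - cos θ) ^ (-c) :=
  (continuous_const.sub continuous_cos).rpow_const fun θ => Or.inl (sub_cos_pos ht θ).ne'

lemma hasDerivAt_sub_cos_rpow (ht : 1 < t) (c θ : ℝ) :
    HasDerivAt (fun θ => (t - cos θ) ^ (-c)) (-c * (t - cos θ) ^ (-(c + 1)) * sin θ) θ := by
  convert ((hasDerivAt_cos θ).const_sub t).rpow_const (p := -c)
    (Or.inl (sub_cos_pos ht θ).ne') using 1
  rw [show -c - 1 = -(c + 1) by ring]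
  ring

lemma sub_cos_rpow_neg_le (ht : 1 < t) {c : ℝ} (hc : 0 ≤ c) (θ : ℝ) :
    (t - cos θ) ^ (-c) ≤ (t - 1) ^ (-c) :=
  rpow_le_rpow_of_nonpos (by linarith) (by linarith [cos_le_one θ]) (by linarith)

lemma rpow_neg_eq_mul_rpow_neg_add_one {v : ℝ} (hv : 0 < v) (c : ℝ) :
    v ^ (-c) = v * v ^ (-(c + 1)) := by
  rw [show -c = 1 + -(c + 1) by ring, rpow_add hv, rpow_one]

end SubCosRpow

section SinPowIntegral

noncomputable def sinPowIntegral (t : ℝ) (k : ℕ) (c : ℝ) : ℝ :=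
  ∫ θ in 0..π, sin θ ^ (2 * k) * (t - cos θ) ^ (-c)

variable {t : ℝ} (ht : 1 < t)
include ht

lemma continuous_sin_pow_mul_sub_cos_rpow (k : ℕ) (c : ℝ) :
    Continuous fun θ => sin θ ^ (2 * k) * (t - cos θ) ^ (-c) :=
  (continuous_sin.pow _).mul (continuous_sub_cos_rpow ht c)

lemma integral_sin_pow_mul_cos_mul_sub_cos_rpow (k : ℕ) (c : ℝ) :
    ∫ θ in 0..π, sin θ ^ (2 * k) * cos θ * (t - cos θ) ^ (-(c + 1)) =
      t * sinPowIntegral t k (c + 1) - sinPowIntegral t k c := by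
  have hpt : ∀ θ, sin θ ^ (2 * k) * cos θ * (t - cos θ) ^ (-(c + 1)) =
      t * (sin θ ^ (2 * k) * (t - cos θ) ^ (-(c + 1))) - sin θ ^ (2 * k) * (t - cos θ) ^ (-c) := by
    intro θ
    rw [rpow_neg_eq_mul_rpow_neg_add_one (sub_cos_pos ht θ) c]
    ring
  have hint := fun c =>
    (continuous_sin_pow_mul_sub_cos_rpow ht k c).intervalIntegrable (μ := volume) 0 π
  simp_rw [hpt]
  rw [intervalIntegral.integral_sub ((hint _).const_mul t) (hint _),
    intervalIntegral.integral_const_mul]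
  rfl

/-- Integration by parts against `d/dθ (sin^{2k+1} θ)`. -/
lemma sinPowIntegral_ibp (k : ℕ) (c : ℝ) :
    (2 * k + 1) * (t * sinPowIntegral t k (c + 1) - sinPowIntegral t k c) =
      (c + 1) * sinPowIntegral t (k + 1) (c + 2) := by
  have hderiv : ∀ θ, HasDerivAt (fun θ => sin θ ^ (2 * k + 1) * (t - cos θ) ^ (-(c + 1)))
      ((2 * k + 1) * (sin θ ^ (2 * k) * cos θ * (t - cos θ) ^ (-(c + 1))) -
        (c + 1) * (sin θ ^ (2 * (k + 1)) * (t - cos θ) ^ (-(c + 2)))) θ := by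
    intro θ
    refine (((hasDerivAt_sin θ).pow (2 * k + 1)).mul
      (hasDerivAt_sub_cos_rpow ht (c + 1) θ)).congr_deriv ?_
    rw [show c + 1 + 1 = c + 2 by ring, Nat.add_sub_cancel]
    simp only [Pi.pow_apply]
    push_cast
    ring
  have hcont₁ : Continuous fun θ => sin θ ^ (2 * k) * cos θ * (t - cos θ) ^ (-(c + 1)) :=
    ((continuous_sin.pow _).mul continuous_cos).mul (continuous_sub_cos_rpow ht _)
  have hcont₂ := continuous_sin_pow_mul_sub_cos_rpow ht (k + 1) (c + 2)
  have hftc := integral_eq_sub_of_hasDerivAt (fun θ _ => hderiv θ)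
    ((by fun_prop : Continuous _).intervalIntegrable 0 π)
  rw [intervalIntegral.integral_sub ((hcont₁.const_mul _).intervalIntegrable _ _)
      ((hcont₂.const_mul _).intervalIntegrable _ _), intervalIntegral.integral_const_mul,
    intervalIntegral.integral_const_mul, integral_sin_pow_mul_cos_mul_sub_cos_rpow ht] at hftc
  simp only [sin_pi, sin_zero, zero_pow (Nat.succ_ne_zero _), zero_mul, sub_self] at hftc
  exact sub_eq_zero.mp hftc

/-- `sin² θ = 1 - (t - v)²` with `v = t - cos θ`. -/
lemma sinPowIntegral_succ (k : ℕ) (c : ℝ) :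
    sinPowIntegral t (k + 1) (c + 2) = (1 - t ^ 2) * sinPowIntegral t k (c + 2) +
      2 * t * sinPowIntegral t k (c + 1) - sinPowIntegral t k c := by
  have hpt : ∀ θ, sin θ ^ (2 * (k + 1)) * (t - cos θ) ^ (-(c + 2)) =
      (1 - t ^ 2) * (sin θ ^ (2 * k) * (t - cos θ) ^ (-(c + 2))) +
        2 * t * (sin θ ^ (2 * k) * (t - cos θ) ^ (-(c + 1))) -
        sin θ ^ (2 * k) * (t - cos θ) ^ (-c) := by
    intro θ
    have hv := sub_cos_pos ht θ
    rw [rpow_neg_eq_mul_rpow_neg_add_one hv c, rpow_neg_eq_mul_rpow_neg_add_one hv (c + 1),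
      show c + 1 + 1 = c + 2 by ring, show 2 * (k + 1) = 2 * k + 2 by ring, pow_add, sin_sq]
    ring
  have hint := fun c =>
    (continuous_sin_pow_mul_sub_cos_rpow ht k c).intervalIntegrable (μ := volume) 0 π
  rw [sinPowIntegral]
  simp_rw [hpt]
  rw [intervalIntegral.integral_sub (((hint _).const_mul _).add ((hint _).const_mul _)) (hint _),
    intervalIntegral.integral_add ((hint _).const_mul _) ((hint _).const_mul _),
    intervalIntegral.integral_const_mul, intervalIntegral.integral_const_mul]
  rfl

lemma sinPowIntegral_three_term (n : ℕ) :
    (2 * n + 1) * (2 * n + 5) * sinPowIntegral t (n + 2) (n + 2 + 3 / 2) =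
      8 * (n + 1) * t * (2 * n + 3) * sinPowIntegral t (n + 1) (n + 1 + 3 / 2) -
        4 * (2 * n + 3) * (2 * n + 1) * sinPowIntegral t n (n + 3 / 2) := by
  have ibp₀ := sinPowIntegral_ibp ht n (n + 1 / 2)
  have ibp₁ := sinPowIntegral_ibp ht n (n - 1 / 2)
  have ibp₂ := sinPowIntegral_ibp ht (n + 1) (n + 3 / 2)
  have hsucc := sinPowIntegral_succ ht n (n - 1 / 2)
  push_cast at ibp₂ ⊢
  ring_nf at ibp₀ ibp₁ ibp₂ hsucc ⊢
  have hlow : sinPowIntegral t n (-1 / 2 + n) = (t ^ 2 - 1) * sinPowIntegral t n (3 / 2 + n) := by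
    have hn : (n : ℝ) + 1 / 2 ≠ 0 := by positivity
    apply mul_left_cancel₀ hn
    linear_combination -ibp₁ - (n + 1 / 2) * hsucc
  linear_combination 4 * t * (2 * n + 3) * ibp₀ - 2 * (2 * n + 1) * ibp₂ -
    2 * (2 * n + 1) * (2 * n + 3) * (hsucc - hlow)

end SinPowIntegral

section CosMulIntegral

noncomputable def cosMulIntegral (t c : ℝ) (n : ℕ) : ℝ :=
  ∫ θ in -π..π, cos (n * θ) * (t - cos θ) ^ (-c)

variable {t : ℝ} (ht : 1 < t)
include ht

lemma continuous_cos_mul_sub_cos_rpow (a c : ℝ) :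
    Continuous fun θ => cos (a * θ) * (t - cos θ) ^ (-c) :=
  (continuous_cos.comp (continuous_const_mul a)).mul (continuous_sub_cos_rpow ht c)

/-- Integration by parts against `d/dθ sin ((n + 1) θ)`, then `2 sin ((n+1)θ) sin θ =
cos (n θ) - cos ((n + 2) θ)`. -/
lemma cosMulIntegral_ibp (c : ℝ) (n : ℕ) :
    (n + 1) * cosMulIntegral t c (n + 1) =
      c / 2 * (cosMulIntegral t (c + 1) n - cosMulIntegral t (c + 1) (n + 2)) := by
  have hderiv : ∀ θ, HasDerivAt (fun θ => sin ((n + 1) * θ) * (t - cos θ) ^ (-c))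
      ((n + 1) * (cos ((n + 1) * θ) * (t - cos θ) ^ (-c)) -
        c / 2 * (cos (n * θ) * (t - cos θ) ^ (-(c + 1))) +
        c / 2 * (cos ((n + 2) * θ) * (t - cos θ) ^ (-(c + 1)))) θ := by
    intro θ
    refine (((hasDerivAt_id θ).const_mul ((n : ℝ) + 1)).sin.mul
      (hasDerivAt_sub_cos_rpow ht c θ)).congr_deriv ?_
    have hn : (n : ℝ) * θ = (n + 1) * θ - θ := by ring
    have hn₂ : ((n : ℝ) + 2) * θ = (n + 1) * θ + θ := by ring
    rw [hn, hn₂, cos_sub, cos_add]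
    simp only [id, mul_one]
    ring
  have hint := fun a c => (continuous_cos_mul_sub_cos_rpow ht a c).intervalIntegrable
    (μ := volume) (-π) π
  have hftc := integral_eq_sub_of_hasDerivAt (fun θ _ => hderiv θ)
    ((((hint _ _).const_mul _).sub ((hint _ _).const_mul _)).add ((hint _ _).const_mul _))
  rw [intervalIntegral.integral_add (((hint _ _).const_mul _).sub ((hint _ _).const_mul _))
      ((hint _ _).const_mul _),
    intervalIntegral.integral_sub ((hint _ _).const_mul _) ((hint _ _).const_mul _),
    intervalIntegral.integral_const_mul, intervalIntegral.integral_const_mul,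
    intervalIntegral.integral_const_mul] at hftc
  have hπ : sin (((n : ℝ) + 1) * π) = 0 := by exact_mod_cast sin_nat_mul_pi (n + 1)
  rw [hπ, mul_neg, sin_neg, hπ] at hftc
  unfold cosMulIntegral
  push_cast
  linear_combination hftc

lemma cosMulIntegral_eq_mul_sub (c : ℝ) (n : ℕ) :
    cosMulIntegral t c (n + 1) = t * cosMulIntegral t (c + 1) (n + 1) -
      (cosMulIntegral t (c + 1) (n + 2) + cosMulIntegral t (c + 1) n) / 2 := by
  have hpt : ∀ θ, cos (((n + 1 : ℕ) : ℝ) * θ) * (t - cos θ) ^ (-c) =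
      t * (cos (((n + 1 : ℕ) : ℝ) * θ) * (t - cos θ) ^ (-(c + 1))) -
        (cos (((n + 2 : ℕ) : ℝ) * θ) * (t - cos θ) ^ (-(c + 1)) +
          cos ((n : ℝ) * θ) * (t - cos θ) ^ (-(c + 1))) / 2 := by
    intro θ
    have hn : (n : ℝ) * θ = (n + 1) * θ - θ := by ring
    have hn₂ : ((n : ℝ) + 2) * θ = (n + 1) * θ + θ := by ring
    rw [rpow_neg_eq_mul_rpow_neg_add_one (sub_cos_pos ht θ) c]
    push_cast
    rw [hn, hn₂, cos_sub, cos_add]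
    ring
  have hint := fun (a : ℕ) => (continuous_cos_mul_sub_cos_rpow ht a (c + 1)).intervalIntegrable
    (μ := volume) (-π) π
  unfold cosMulIntegral
  simp_rw [hpt]
  rw [intervalIntegral.integral_sub ((hint _).const_mul _) (((hint _).add (hint _)).div_const _),
    intervalIntegral.integral_const_mul, intervalIntegral.integral_div,
    intervalIntegral.integral_add (hint _) (hint _)]

lemma cosMulIntegral_recurrence (c : ℝ) (n : ℕ) :
    (n + 1 - c) * cosMulIntegral t (c + 1) (n + 2) =
      2 * (n + 1) * t * cosMulIntegral t (c + 1) (n + 1) -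
        (n + 1 + c) * cosMulIntegral t (c + 1) n := by
  linear_combination -2 * cosMulIntegral_ibp ht c n + 2 * (n + 1) * cosMulIntegral_eq_mul_sub ht c n

lemma abs_cosMulIntegral_le {c : ℝ} (hc : 0 ≤ c) (n : ℕ) :
    |cosMulIntegral t c n| ≤ (t - 1) ^ (-c) * (2 * π) := by
  have hbound : ∀ θ ∈ Set.uIoc (-π) π, ‖cos (n * θ) * (t - cos θ) ^ (-c)‖ ≤ (t - 1) ^ (-c) := by
    intro θ _
    rw [norm_mul, norm_of_nonneg (rpow_nonneg (sub_cos_pos ht θ).le _)]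
    exact (mul_le_of_le_one_left (rpow_nonneg (sub_cos_pos ht θ).le _) (abs_cos_le_one _)).trans
      (sub_cos_rpow_neg_le ht hc θ)
  have := intervalIntegral.norm_integral_le_of_norm_le_const hbound
  rwa [abs_of_pos (by linarith [pi_pos]), show π - -π = 2 * π by ring] at this

end CosMulIntegral

section LegendreRecurrence

/-- The three-term recurrence of `n ↦ Q^1_{n-1/2}(t)`. -/
def SatisfiesLegendreRecurrence (t : ℝ) (x : ℕ → ℝ) : Prop :=
  ∀ n : ℕ, (2 * n + 1) * x (n + 2) = 4 * (n + 1) * t * x (n + 1) - (2 * n + 3) * x n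

lemma SatisfiesLegendreRecurrence.eq {t : ℝ} {x y : ℕ → ℝ} (hx : SatisfiesLegendreRecurrence t x)
    (hy : SatisfiesLegendreRecurrence t y) (h₀ : x 0 = y 0) (h₁ : x 1 = y 1) : x = y := by
  funext n
  induction n using Nat.twoStepInduction with
  | zero => exact h₀
  | one => exact h₁
  | more n ih ih₁ =>
    apply mul_left_cancel₀ (by positivity : (2 * n + 1 : ℝ) ≠ 0)
    rw [hx n, hy n, ih, ih₁]

variable {t : ℝ} (ht : 1 < t)
include ht

lemma satisfiesLegendreRecurrence_cosMulIntegral :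
    SatisfiesLegendreRecurrence t (cosMulIntegral t (3 / 2)) := by
  intro n
  have h := cosMulIntegral_recurrence ht (1 / 2) n
  norm_num at h
  linear_combination 2 * h

lemma satisfiesLegendreRecurrence_sinPowIntegral :
    SatisfiesLegendreRecurrence t
      fun n => 2 * (2 * n + 1) * sinPowIntegral t n (n + 3 / 2) / 2 ^ n := by
  intro n
  have h := sinPowIntegral_three_term ht n
  push_cast
  linear_combination h / (2 * 2 ^ n)

lemma cosMulIntegral_eq_two_mul_integral (c : ℝ) (n : ℕ) :
    cosMulIntegral t c n = 2 * ∫ θ in 0..π, cos (n * θ) * (t - cos θ) ^ (-c) :=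
  integral_symmetric_of_even (continuous_cos_mul_sub_cos_rpow ht n c)
    fun θ => by rw [mul_neg, cos_neg, cos_neg]

lemma cosMulIntegral_eq_sinPowIntegral (n : ℕ) :
    cosMulIntegral t (3 / 2) n = 2 * (2 * n + 1) * sinPowIntegral t n (n + 3 / 2) / 2 ^ n := by
  refine congrFun ((satisfiesLegendreRecurrence_cosMulIntegral ht).eq
    (satisfiesLegendreRecurrence_sinPowIntegral ht) ?_ ?_) n
  · rw [cosMulIntegral_eq_two_mul_integral ht, sinPowIntegral]
    simp
  · have hibp := sinPowIntegral_ibp ht 0 (1 / 2)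
    have hcos := integral_sin_pow_mul_cos_mul_sub_cos_rpow ht 0 (1 / 2)
    norm_num at hibp hcos ⊢
    rw [cosMulIntegral_eq_two_mul_integral ht]
    simp only [Nat.cast_one, one_mul]
    linear_combination 2 * hcos + 2 * hibp

end LegendreRecurrence

section QhFormula

lemma integral_one_sub_sq_rpow_mul_eq_sinPowIntegral (t c : ℝ) (n : ℕ) :
    ∫ s in (-1 : ℝ)..1, (1 - s ^ 2) ^ ((n : ℝ) - 1 / 2) * (t - s) ^ (-c) =
      sinPowIntegral t n c := by
  have hderiv : ∀ θ ∈ Set.Ioo 0 π, HasDerivWithinAt cos (-sin θ) (Set.Ioo 0 π) θ :=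
    fun θ _ => (hasDerivAt_cos θ).hasDerivWithinAt
  have hsubst := integral_image_eq_integral_abs_deriv_smul measurableSet_Ioo hderiv
    (injOn_cos.mono Set.Ioo_subset_Icc_self)
    fun s => (1 - s ^ 2) ^ ((n : ℝ) - 1 / 2) * (t - s) ^ (-c)
  rw [show cos '' Set.Ioo 0 π = Set.Ioo (-1) 1 from
    cosPartialHomeomorph.image_source_eq_target] at hsubst
  rw [intervalIntegral.integral_of_le (by norm_num), integral_Ioc_eq_integral_Ioo, hsubst,
    sinPowIntegral, intervalIntegral.integral_of_le pi_pos.le, integral_Ioc_eq_integral_Ioo]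
  refine setIntegral_congr_fun measurableSet_Ioo fun θ hθ => ?_
  have hsin : 0 < sin θ := sin_pos_of_pos_of_lt_pi hθ.1 hθ.2
  rw [smul_eq_mul, abs_neg, abs_of_pos hsin, ← sin_sq, ← rpow_natCast, ← rpow_mul hsin.le,
    ← mul_assoc, ← rpow_natCast (sin θ) (2 * n),
    show ((2 * n : ℕ) : ℝ) = 1 + (2 : ℕ) * (n - 1 / 2) by push_cast; ring, rpow_add hsin, rpow_one]

lemma qh_one_eq {η₀ : ℝ} (hη₀ : 0 < η₀) (n : ℕ) :
    qh η₀ n 1 = -(sinh η₀ / (4 * √2)) * cosMulIntegral (cosh η₀) (3 / 2) n := by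
  have ht : 1 < cosh η₀ := one_lt_cosh.mpr hη₀.ne'
  have hs : 0 < sinh η₀ := sinh_pos_iff.mpr hη₀
  have hΓ : Gamma ((n : ℝ) + (1 : ℕ) + 1 / 2) / Gamma ((n : ℝ) + 1 / 2) = n + 1 / 2 := by
    rw [Nat.cast_one, show (n : ℝ) + 1 + 1 / 2 = n + 1 / 2 + 1 by ring,
      Gamma_add_one (by positivity), mul_div_assoc, div_self (Gamma_pos_of_pos (by positivity)).ne',
      mul_one]
  have hsinh : (cosh η₀ ^ 2 - 1) ^ (((1 : ℕ) : ℝ) / 2) = sinh η₀ := by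
    rw [cosh_sq', add_sub_cancel_left, Nat.cast_one, ← sqrt_eq_rpow, sqrt_sq hs.le]
  have hpow : (2 : ℝ) ^ ((n : ℝ) + 1 / 2) = 2 ^ n * √2 := by
    rw [rpow_add two_pos, rpow_natCast, sqrt_eq_rpow]
  rw [qh, Qh, hΓ, hsinh, hpow, show (n : ℝ) + (1 : ℕ) + 1 / 2 = n + 3 / 2 by push_cast; ring,
    integral_one_sub_sq_rpow_mul_eq_sinPowIntegral, cosMulIntegral_eq_sinPowIntegral ht]
  field_simp
  ring

lemma abs_qh_one_le {η₀ : ℝ} (hη₀ : 0 < η₀) (n : ℕ) :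
    |qh η₀ n 1| ≤ sinh η₀ / (4 * √2) * ((cosh η₀ - 1) ^ (-(3 / 2 : ℝ)) * (2 * π)) := by
  have hs : 0 < sinh η₀ := sinh_pos_iff.mpr hη₀
  rw [qh_one_eq hη₀, abs_mul, abs_neg, abs_of_pos (by positivity)]
  exact mul_le_mul_of_nonneg_left
    (abs_cosMulIntegral_le (one_lt_cosh.mpr hη₀.ne') (by norm_num) n) (by positivity)

lemma summable_abs_mul_qh_one {η₀ : ℝ} (hη₀ : 0 < η₀) {β : ℕ → ℝ}
    (hβ : Summable fun n => |β n|) : Summable fun n => |β n * qh η₀ n 1| :=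
  .of_nonneg_of_le (fun _ => abs_nonneg _) (fun n => (abs_mul _ _).trans_le
    (mul_le_mul_of_nonneg_left (abs_qh_one_le hη₀ n) (abs_nonneg _))) (hβ.mul_right _)

end QhFormula

section Phi

lemma continuous_Phi (ν n : ℤ) : Continuous (Phi ν n) := by
  unfold Phi
  split_ifs <;> fun_prop

lemma abs_Phi_le_one (ν n : ℤ) (x : ℝ) : |Phi ν n x| ≤ 1 := by
  unfold Phi
  split_ifs
  exacts [abs_cos_le_one _, abs_sin_le_one _]

lemma integral_Phi_mul_of_even {ν : ℤ} (hν : ν = 1 ∨ ν = -1) (n : ℕ) {g : ℝ → ℝ}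
    (hg : Continuous g) (heven : ∀ x, g (-x) = g x) :
    ∫ x in -π..π, Phi ν n x * g x = if ν = 1 then ∫ x in -π..π, cos (n * x) * g x else 0 := by
  rcases hν with rfl | rfl
  · simp [Phi]
  · simp only [Phi, Int.reduceNeg, reduceCtorEq, if_false, Int.cast_natCast]
    exact integral_symmetric_of_odd (by fun_prop) fun x => by rw [mul_neg, sin_neg, heven]; ring

lemma integral_cos_nat_mul (m : ℕ) :
    ∫ x in -π..π, cos (m * x) = if m = 0 then 2 * π else 0 := by
  split_ifs with hm
  · simp [hm]
    ring
  · rw [intervalIntegral.integral_comp_mul_left (fun x => cos x) (Nat.cast_ne_zero.mpr hm),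
      integral_cos, mul_neg, sin_neg, sin_nat_mul_pi]
    simp

lemma integral_Phi {μ : ℤ} (hμ : μ = 1 ∨ μ = -1) (m : ℕ) :
    ∫ x in -π..π, Phi μ m x = if μ = 1 ∧ m = 0 then 2 * π else 0 := by
  have h := integral_Phi_mul_of_even hμ m (g := fun _ => 1) continuous_const fun _ => rfl
  simp only [mul_one] at h
  rw [h, integral_cos_nat_mul]
  split_ifs <;> simp_all

end Phi

section SeparableSeries

variable {ι : Type*} [Countable ι]

lemma intervalIntegral_tsum_of_abs_le {a b : ℝ} {F : ι → ℝ → ℝ} {C : ι → ℝ}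
    (hF : ∀ i, Continuous (F i)) (hFC : ∀ i x, |F i x| ≤ C i) (hC : Summable C) :
    ∫ x in a..b, ∑' i, F i x = ∑' i, ∫ x in a..b, F i x :=
  (intervalIntegral.hasSum_integral_of_dominated_convergence (fun i _ => C i)
    (fun i => (hF i).aestronglyMeasurable) (fun i => ae_of_all _ fun x _ => hFC i x)
    (ae_of_all _ fun _ _ => hC) intervalIntegrable_const
    (ae_of_all _ fun x _ => (hC.of_norm_bounded fun i => hFC i x).hasSum)).tsum_eq.symm

lemma integral_integral_tsum_mul {a b a' b' M N : ℝ} (c : ι → ℝ) (f g : ι → ℝ → ℝ)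
    (hc : Summable fun i => |c i|) (hf : ∀ i, Continuous (f i)) (hg : ∀ i, Continuous (g i))
    (hfM : ∀ i x, |f i x| ≤ M) (hgN : ∀ i y, |g i y| ≤ N) :
    ∫ y in a'..b', ∫ x in a..b, ∑' i, c i * f i x * g i y =
      ∑' i, c i * (∫ x in a..b, f i x) * ∫ y in a'..b', g i y := by
  have hinner : ∀ y, ∫ x in a..b, ∑' i, c i * f i x * g i y =
      ∑' i, c i * (∫ x in a..b, f i x) * g i y := by
    intro y
    rw [intervalIntegral_tsum_of_abs_le (C := fun i => |c i| * M * N)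
      (fun i => by fun_prop) (fun i x => ?_) ((hc.mul_right M).mul_right N)]
    · congr with i
      rw [intervalIntegral.integral_mul_const, intervalIntegral.integral_const_mul]
    · rw [abs_mul, abs_mul]
      exact mul_le_mul (mul_le_mul_of_nonneg_left (hfM i x) (abs_nonneg _)) (hgN i y)
        (abs_nonneg _) (mul_nonneg (abs_nonneg _) ((abs_nonneg _).trans (hfM i x)))
  have hintf : ∀ i, |∫ x in a..b, f i x| ≤ M * |b - a| := fun i => by
    simpa only [norm_eq_abs] using
      intervalIntegral.norm_integral_le_of_norm_le_const (a := a) (b := b) (f := f i)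
        fun x _ => (norm_eq_abs (f i x)).trans_le (hfM i x)
  simp_rw [hinner]
  rw [intervalIntegral_tsum_of_abs_le (C := fun i => |c i| * (M * |b - a|) * N)
    (fun i => by fun_prop) (fun i y => ?_) ((hc.mul_right _).mul_right N)]
  · congr with i
    rw [intervalIntegral.integral_const_mul]
  · rw [abs_mul, abs_mul]
    exact mul_le_mul (mul_le_mul_of_nonneg_left (hintf i) (abs_nonneg _)) (hgN i y)
      (abs_nonneg _) (mul_nonneg (abs_nonneg _) ((abs_nonneg _).trans (hintf i)))

end SeparableSeries

section AdmissibleModes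

/-- The admissible quadruple `(n, 0, +1, +1)`, i.e. the mode `cos (n θ)`. -/
def axisymmetricIndex (n : ℕ) : {p : ℕ × ℕ × ℤ × ℤ // Admissible p.1 p.2.1 p.2.2.1 p.2.2.2} :=
  ⟨(n, 0, 1, 1), Or.inl rfl, Or.inl rfl, by simp, by simp⟩

lemma axisymmetricIndex_injective : Function.Injective axisymmetricIndex :=
  fun _ _ h => congrArg (fun q => q.1.1) h

lemma tsum_mul_integral_Phi_mul_integral_Phi (b : ℕ → ℕ → ℤ → ℤ → ℝ) {g : ℝ → ℝ}
    (hg : Continuous g) (heven : ∀ x, g (-x) = g x) :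
    ∑' q : {p : ℕ × ℕ × ℤ × ℤ // Admissible p.1 p.2.1 p.2.2.1 p.2.2.2},
        b q.1.1 q.1.2.1 q.1.2.2.1 q.1.2.2.2 * (∫ θ in -π..π, Phi q.1.2.2.1 q.1.1 θ * g θ) *
          ∫ φ in -π..π, Phi q.1.2.2.2 q.1.2.1 φ =
      2 * π * ∑' n : ℕ, b n 0 1 1 * ∫ θ in -π..π, cos (n * θ) * g θ := by
  rw [← tsum_mul_left, ← axisymmetricIndex_injective.tsum_eq]
  · congr with n
    simp only [axisymmetricIndex, integral_Phi_mul_of_even (Or.inl rfl) n hg heven,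
      integral_Phi (Or.inl rfl), if_true, and_self]
    ring
  · rintro ⟨⟨n, m, ν, μ⟩, hadm⟩ hq
    rw [Function.mem_support, integral_Phi_mul_of_even hadm.1 _ hg heven,
      integral_Phi hadm.2.1] at hq
    split_ifs at hq with hν₁ hμm
    · obtain ⟨rfl, rfl⟩ := hμm
      subst hν₁
      exact ⟨n, rfl⟩
    all_goals simp at hq

end AdmissibleModes

section TorusWeight

/-- `√(t₀ - cos θ)` times the density `s₀ / (t₀ - cos θ)²` of the surface element. -/
noncomputable def torusWeight (η₀ θ : ℝ) : ℝ := (cosh η₀ - cos θ) ^ (-(3 / 2 : ℝ)) * sinh η₀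

lemma torusWeight_neg (η₀ θ : ℝ) : torusWeight η₀ (-θ) = torusWeight η₀ θ := by
  rw [torusWeight, torusWeight, cos_neg]

variable {η₀ : ℝ} (hη₀ : 0 < η₀)
include hη₀

lemma sqrt_mul_surface_density (θ : ℝ) :
    √(cosh η₀ - cos θ) * (sinh η₀ / (cosh η₀ - cos θ) ^ 2) = torusWeight η₀ θ := by
  have hv := sub_cos_pos (one_lt_cosh.mpr hη₀.ne') θ
  have h : (cosh η₀ - cos θ) ^ (-(3 / 2 : ℝ)) =
      (cosh η₀ - cos θ) ^ (1 / 2 : ℝ) * ((cosh η₀ - cos θ) ^ 2)⁻¹ := by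
    rw [← rpow_natCast, ← rpow_neg hv.le, ← rpow_add hv]
    norm_num
  rw [torusWeight, h, sqrt_eq_rpow]
  ring

lemma continuous_torusWeight : Continuous (torusWeight η₀) :=
  (continuous_sub_cos_rpow (one_lt_cosh.mpr hη₀.ne') _).mul continuous_const

lemma abs_Phi_mul_torusWeight_le (ν n : ℤ) (θ : ℝ) :
    |Phi ν n θ * torusWeight η₀ θ| ≤ (cosh η₀ - 1) ^ (-(3 / 2 : ℝ)) * sinh η₀ := by
  have ht := one_lt_cosh.mpr hη₀.ne'
  have hs := (sinh_pos_iff.mpr hη₀).le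
  have hw : 0 ≤ torusWeight η₀ θ := mul_nonneg (rpow_nonneg (sub_cos_pos ht θ).le _) hs
  rw [abs_mul, abs_of_nonneg hw]
  exact (mul_le_of_le_one_left hw (abs_Phi_le_one ν n θ)).trans
    (mul_le_mul_of_nonneg_right (sub_cos_rpow_neg_le ht (by norm_num) θ) hs)

lemma integral_cos_mul_torusWeight (n : ℕ) :
    2 * π * ∫ θ in -π..π, cos (n * θ) * torusWeight η₀ θ = -8 * √2 * π * qh η₀ n 1 := by
  simp_rw [torusWeight, ← mul_assoc]
  rw [intervalIntegral.integral_mul_const, qh_one_eq hη₀, ← cosMulIntegral]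
  field_simp
  ring

lemma integral_integral_tsum_Phi_mul_torusWeight (b : ℕ → ℕ → ℤ → ℤ → ℝ)
    (hb : Summable fun q : {p : ℕ × ℕ × ℤ × ℤ // Admissible p.1 p.2.1 p.2.2.1 p.2.2.2} =>
      |b q.1.1 q.1.2.1 q.1.2.2.1 q.1.2.2.2|) :
    ∫ φ in -π..π, ∫ θ in -π..π,
        ∑' q : {p : ℕ × ℕ × ℤ × ℤ // Admissible p.1 p.2.1 p.2.2.1 p.2.2.2},
          b q.1.1 q.1.2.1 q.1.2.2.1 q.1.2.2.2 * (Phi q.1.2.2.1 q.1.1 θ * torusWeight η₀ θ) *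
            Phi q.1.2.2.2 q.1.2.1 φ =
      -8 * √2 * π * ∑' n, b n 0 1 1 * qh η₀ n 1 := by
  rw [integral_integral_tsum_mul _ (fun q θ => Phi q.1.2.2.1 q.1.1 θ * torusWeight η₀ θ)
      (fun q => Phi q.1.2.2.2 q.1.2.1) hb
      (fun q => (continuous_Phi _ _).mul (continuous_torusWeight hη₀))
      (fun q => continuous_Phi _ _) (fun q => abs_Phi_mul_torusWeight_le hη₀ _ _)
      (fun q => abs_Phi_le_one _ _),
    tsum_mul_integral_Phi_mul_integral_Phi b (continuous_torusWeight hη₀) (torusWeight_neg η₀),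
    ← tsum_mul_left, ← tsum_mul_left]
  congr with n
  rw [mul_left_comm, integral_cos_mul_torusWeight hη₀, mul_left_comm]

end TorusWeight

/-- surface integral of the Neumann datum and the compatibility
condition in terms of the Fourier coefficients. -/
theorem compatibility_condition (η₀ : ℝ) (hη₀ : 0 < η₀)
    (b : ℕ → ℕ → ℤ → ℤ → ℝ)
    (hb : Summable (fun q : {p : ℕ × ℕ × ℤ × ℤ // Admissible p.1 p.2.1 p.2.2.1 p.2.2.2} =>
      |b q.1.1 q.1.2.1 q.1.2.2.1 q.1.2.2.2|))
    (h : ℝ → ℝ → ℝ)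
    (hdef : ∀ θ φ, h θ φ =
      Real.sqrt (Real.cosh η₀ - Real.cos θ) *
        ∑' q : {p : ℕ × ℕ × ℤ × ℤ // Admissible p.1 p.2.1 p.2.2.1 p.2.2.2},
          b q.1.1 q.1.2.1 q.1.2.2.1 q.1.2.2.2 *
            Phi q.1.2.2.1 ((q.1.1 : ℤ)) θ * Phi q.1.2.2.2 ((q.1.2.1 : ℤ)) φ) :
    Summable (fun n : ℕ => |b n 0 1 1 * qh η₀ n 1|) ∧
    (∫ φ in (-π)..π, ∫ θ in (-π)..π,
        h θ φ * (Real.sinh η₀ / (Real.cosh η₀ - Real.cos θ) ^ 2)) =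
      -8 * Real.sqrt 2 * π * ∑' n : ℕ, b n 0 1 1 * qh η₀ n 1 ∧
    ((∫ φ in (-π)..π, ∫ θ in (-π)..π,
        h θ φ * (Real.sinh η₀ / (Real.cosh η₀ - Real.cos θ) ^ 2)) = 0 ↔
      ∑' n : ℕ, qh η₀ n 1 * b n 0 1 1 = 0) := by
  have hintegrand : ∀ θ φ, h θ φ * (sinh η₀ / (cosh η₀ - cos θ) ^ 2) =
      ∑' q : {p : ℕ × ℕ × ℤ × ℤ // Admissible p.1 p.2.1 p.2.2.1 p.2.2.2},
        b q.1.1 q.1.2.1 q.1.2.2.1 q.1.2.2.2 * (Phi q.1.2.2.1 q.1.1 θ * torusWeight η₀ θ) *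
          Phi q.1.2.2.2 q.1.2.1 φ := by
    intro θ φ
    rw [hdef, mul_right_comm, sqrt_mul_surface_density hη₀, ← tsum_mul_left]
    congr with q
    ring
  have hsurf : (∫ φ in (-π)..π, ∫ θ in (-π)..π, h θ φ * (sinh η₀ / (cosh η₀ - cos θ) ^ 2)) =
      -8 * √2 * π * ∑' n, b n 0 1 1 * qh η₀ n 1 := by
    simp_rw [hintegrand]
    exact integral_integral_tsum_Phi_mul_torusWeight hη₀ b hb
  refine ⟨summable_abs_mul_qh_one hη₀ (hb.comp_injective axisymmetricIndex_injective), hsurf, ?_⟩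
  simp_rw [hsurf, mul_comm (qh η₀ _ 1)]
  rw [mul_eq_zero, or_iff_right (by simp [pi_ne_zero])]
end
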